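/- arXiv:1801.00630 — 2 statements merged into one kernel-verified Lean document; each statement's English description precedes it below -/
import Mathlib

section
/- (The flared vase.) Let W := {p : ℝ × ℝ | (p.1 = p.2 ∨ p.1 = −p.2) ∧ 1 ≤ p.2} ∪ {p : ℝ × ℝ | −1 ≤ p.1 ∧ p.1 ≤ 1 ∧ p.2 = 1}, regarded as a metric space with the metric inherited from ℝ × ℝ (max metric), with base point (1,1), and let π : *W → *ℝ be the germ map of the first-coordinate function p ↦ p.1. Then for any x, y ∈ INF(W, (1,1)): x ≡ι y if and only if π x and π y have the same sign (0 < π x ↔ 0 < π y). Consequently INF(W,(1,1)) has exactly two macrochain-connected components, i.e. ι(W) has exactly two elements. -/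
open Filter

/-- The nonstandard extension `*S` of a type `S`, realised as germs along the
hyperfilter on `ℕ` (a nonprincipal ultrafilter). -/
abbrev St (S : Type*) : Type _ := Filter.Germ (↑(Filter.hyperfilter ℕ) : Filter ℕ) S

/-- `*d`, the componentwise lift of the distance to the nonstandard extension. -/
noncomputable def starDist {X : Type*} [PseudoMetricSpace X] (x y : St X) : St ℝ :=
  Filter.Germ.map₂ dist x y

/-- `x ∼ y` : two points of `*X` are finitely close if `*d x y ≤ *r` for some real `r`. -/
def FinClose {X : Type*} [PseudoMetricSpace X] (x y : St X) : Prop :=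
  ∃ r : ℝ, starDist x y ≤ (↑r : St ℝ)

/-- `FIN(X,ξ)` : the points of `*X` finitely close to the base point. -/
def FIN {X : Type*} [PseudoMetricSpace X] (ξ : X) : Set (St X) :=
  {x | FinClose x (↑ξ : St X)}

/-- `INF(X,ξ)` : the infinite points of `*X` relative to the base point. -/
def INF {X : Type*} [PseudoMetricSpace X] (ξ : X) : Set (St X) :=
  {x | ¬ FinClose x (↑ξ : St X)}

/-- A subset of a pseudometric space is bounded. -/
def BoundedSet {X : Type*} [PseudoMetricSpace X] (B : Set X) : Prop :=
  ∃ r : ℝ, ∀ a ∈ B, ∀ b ∈ B, dist a b ≤ r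

/-- A map of pseudometric spaces is bornologous. -/
def Bornologous {X Y : Type*} [PseudoMetricSpace X] [PseudoMetricSpace Y] (f : X → Y) : Prop :=
  ∀ r : ℝ, ∃ s : ℝ, ∀ x x' : X, dist x x' ≤ r → dist (f x) (f x') ≤ s

/-- `f` is proper at the base point `η`: preimages of bounded sets containing `η`
are bounded. -/
def ProperAt {X Y : Type*} [PseudoMetricSpace X] [PseudoMetricSpace Y]
    (f : X → Y) (η : Y) : Prop :=
  ∀ B : Set Y, η ∈ B → BoundedSet B → BoundedSet (f ⁻¹' B)

/-- `(N, s)` is an internal hyperfinite chain in `B ⊆ *X` from `x` to `y`. -/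
def InternalChain {X : Type*} [PseudoMetricSpace X] (B : Set (St X)) (x y : St X)
    (N : ℕ → ℕ) (s : ℕ → ℕ → X) : Prop :=
  (↑(fun n => s n 0) : St X) = x ∧
  (↑(fun n => s n (N n)) : St X) = y ∧
  (∀ g : ℕ → ℕ, (∀ᶠ n in (↑(Filter.hyperfilter ℕ) : Filter ℕ), g n ≤ N n) →
    (↑(fun n => s n (g n)) : St X) ∈ B) ∧
  (∀ g : ℕ → ℕ, (∀ᶠ n in (↑(Filter.hyperfilter ℕ) : Filter ℕ), g n < N n) →
    FinClose (↑(fun n => s n (g n)) : St X) (↑(fun n => s n (g n + 1)) : St X))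

/-- `B ⊆ *X` is macrochain-connected. -/
def MacroChainConnected {X : Type*} [PseudoMetricSpace X] (B : Set (St X)) : Prop :=
  ∀ x ∈ B, ∀ y ∈ B, ∃ N s, InternalChain B x y N s

/-- `x ≡ι y` : `x` and `y` are joined by an internal hyperfinite chain lying in `INF(X,ξ)`. -/
def IotaEquiv {X : Type*} [PseudoMetricSpace X] (ξ : X) (x y : St X) : Prop :=
  ∃ N s, InternalChain (INF ξ) x y N s

/-- An element of `*ℕ` is infinite. -/
def InfiniteHypernat (i : St ℕ) : Prop := ∀ m : ℕ, ¬ i ≤ (↑m : St ℕ)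

/-- A coarse sequence : a bornologous and proper map `ℕ → X`. -/
def CoarseSeq {X : Type*} [PseudoMetricSpace X] (s : ℕ → X) : Prop :=
  (∀ k : ℕ, ∃ r : ℝ, ∀ m n : ℕ, Nat.dist m n ≤ k → dist (s m) (s n) ≤ r) ∧
  (∀ B : Set X, BoundedSet B → (s ⁻¹' B).Finite)

/-- `s ⊑ t` for coarse sequences : `s` is a subsequence of `t`. -/
def SubCoarse {X : Type*} [PseudoMetricSpace X] (s t : ℕ → X) : Prop :=
  CoarseSeq s ∧ CoarseSeq t ∧ ∃ κ : ℕ → ℕ, StrictMono κ ∧ s = t ∘ κ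

/-- `s ≡σ t` : the equivalence relation generated by `⊑` on coarse sequences. -/
def SigmaEquiv {X : Type*} [PseudoMetricSpace X] (s t : ℕ → X) : Prop :=
  Relation.EqvGen SubCoarse s t

/-- `(X, ξ)` is non-scattering at infinity. -/
def NonScattering {X : Type*} [PseudoMetricSpace X] (ξ : X) : Prop :=
  ∃ r : ℝ, ∀ A : Set X, ξ ∈ A → BoundedSet A →
    ∀ x ∈ Aᶜ, ∀ y ∈ Aᶜ, ∃ n : ℕ, ∃ c : ℕ → X, c 0 = x ∧ c n = y ∧
      (∀ i ≤ n, c i ∈ Aᶜ) ∧ (∀ i < n, dist (c i) (c (i + 1)) ≤ r)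
/-- The flared vase. -/
def FlaredVase : Set (ℝ × ℝ) :=
  {p | (p.1 = p.2 ∨ p.1 = -p.2) ∧ 1 ≤ p.2} ∪ {p | -1 ≤ p.1 ∧ p.1 ≤ 1 ∧ p.2 = 1}

/-- The germ map of the first coordinate, `π : *W → *ℝ`. -/
noncomputable def flaredProj : St FlaredVase → St ℝ :=
  Filter.Germ.map (fun p : FlaredVase => (p : ℝ × ℝ).1)

lemma finClose_iff {X : Type*} [PseudoMetricSpace X] (f g : ℕ → X) :
    FinClose (↑f : St X) ↑g ↔
      ∃ r : ℝ, ∀ᶠ n in (↑(Filter.hyperfilter ℕ) : Filter ℕ), dist (f n) (g n) ≤ r := by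
  have hc : ∀ r : ℝ, (↑r : St ℝ) = ↑(fun _ : ℕ => r) := fun _ => rfl
  constructor
  · rintro ⟨r, hr⟩
    rw [starDist, Germ.map₂_coe, hc] at hr
    exact ⟨r, Germ.coe_le.1 hr⟩
  · rintro ⟨r, hr⟩
    exact ⟨r, by rw [starDist, Germ.map₂_coe, hc]; exact Germ.coe_le.2 hr⟩

lemma FV.height (p : FlaredVase) : 1 ≤ (p : ℝ × ℝ).2 := by
  rcases p.2 with ⟨_, h⟩ | ⟨_, _, h⟩
  · exact h
  · rw [h]

lemma FV.abs_le (p : FlaredVase) : |(p : ℝ × ℝ).1| ≤ (p : ℝ × ℝ).2 := by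
  rcases p.2 with ⟨h1 | h1, h2⟩ | ⟨h1, h2, h3⟩
  · rw [h1, abs_of_nonneg (by linarith)]
  · rw [h1, abs_neg, abs_of_nonneg (by linarith)]
  · rw [h3, _root_.abs_le]; exact ⟨h1, h2⟩

lemma FV.ray (p : FlaredVase) (h : 1 < (p : ℝ × ℝ).2) :
    (p : ℝ × ℝ).1 = (p : ℝ × ℝ).2 ∨ (p : ℝ × ℝ).1 = -(p : ℝ × ℝ).2 := by
  rcases p.2 with ⟨h1, _⟩ | ⟨_, _, h3⟩
  · exact h1
  · rw [h3] at h; linarith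

lemma FV.dist_eq (p q : FlaredVase) :
    dist p q = max |(p : ℝ × ℝ).1 - (q : ℝ × ℝ).1| |(p : ℝ × ℝ).2 - (q : ℝ × ℝ).2| := by
  rw [Subtype.dist_eq, Prod.dist_eq, Real.dist_eq, Real.dist_eq]

lemma FV.dist_base (ξ : FlaredVase) (hξ : (ξ : ℝ × ℝ) = (1, 1)) (p : FlaredVase) :
    dist p ξ = max |(p : ℝ × ℝ).1 - 1| |(p : ℝ × ℝ).2 - 1| := by
  rw [FV.dist_eq, hξ]

lemma FV.dist_base_le (ξ : FlaredVase) (hξ : (ξ : ℝ × ℝ) = (1, 1)) (p : FlaredVase) :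
    (p : ℝ × ℝ).2 - 1 ≤ dist p ξ ∧ dist p ξ ≤ (p : ℝ × ℝ).2 + 1 := by
  have h1 := FV.height p
  have h2 := FV.abs_le p
  have h2' := _root_.abs_le.1 h2
  rw [FV.dist_base ξ hξ]
  constructor
  · exact le_trans (le_abs_self _) (le_max_right _ _)
  · apply max_le
    · rw [_root_.abs_le]; constructor <;> linarith
    · rw [abs_of_nonneg (by linarith)]; linarith

lemma INF_iff (ξ : FlaredVase) (hξ : (ξ : ℝ × ℝ) = (1, 1)) (f : ℕ → FlaredVase) :
    (↑f : St FlaredVase) ∈ INF ξ ↔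
      ∀ r : ℝ, ∀ᶠ n in (↑(Filter.hyperfilter ℕ) : Filter ℕ), r < (f n : ℝ × ℝ).2 := by
  have key : ∀ r : ℝ,
      (¬ ∀ᶠ n in (↑(Filter.hyperfilter ℕ) : Filter ℕ), dist (f n) ξ ≤ r) ↔
        ∀ᶠ n in (↑(Filter.hyperfilter ℕ) : Filter ℕ), r < dist (f n) ξ := by
    intro r
    rw [← Ultrafilter.eventually_not]
    simp only [not_le]
  constructor
  · intro h r
    have h2 : ¬ ∃ r : ℝ, ∀ᶠ n in (↑(Filter.hyperfilter ℕ) : Filter ℕ), dist (f n) ξ ≤ r := by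
      intro hc; exact h ((finClose_iff f (fun _ => ξ)).2 hc)
    push_neg at h2
    have h3 := (key (r + 1)).1 (by simpa using h2 (r + 1))
    filter_upwards [h3] with n hn
    have := (FV.dist_base_le ξ hξ (f n)).2
    linarith
  · intro h hc
    obtain ⟨r, hr⟩ := (finClose_iff f (fun _ => ξ)).1 hc
    obtain ⟨n, hn1, hn2⟩ := (hr.and (h (r + 1))).exists
    have := (FV.dist_base_le ξ hξ (f n)).1
    linarith

lemma FinClose.symm' {X : Type*} [PseudoMetricSpace X] {x y : St X}
    (h : FinClose x y) : FinClose y x := by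
  induction x using Germ.inductionOn with | h f =>
  induction y using Germ.inductionOn with | h g =>
  rw [finClose_iff] at h ⊢
  obtain ⟨r, hr⟩ := h
  exact ⟨r, hr.mono fun n hn => by rwa [dist_comm]⟩

-- chain reversal

lemma InternalChain.rev {X : Type*} [PseudoMetricSpace X] {B : Set (St X)} {x y : St X}
    {N : ℕ → ℕ} {s : ℕ → ℕ → X} (h : InternalChain B x y N s) :
    InternalChain B y x N (fun n i => s n (N n - i)) := by
  obtain ⟨h1, h2, h3, h4⟩ := h
  refine ⟨by simpa using h2, by simpa using h1, ?_, ?_⟩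
  · intro g hg
    exact h3 (fun n => N n - g n) (Eventually.of_forall fun n => Nat.sub_le _ _)
  · intro g hg
    have key := h4 (fun n => N n - (g n + 1)) (hg.mono fun n hn => by beta_reduce; omega)
    have e1 : (↑(fun n => s n (N n - (g n + 1) + 1)) : St X)
        = ↑(fun n => s n (N n - g n)) := by
      apply Quotient.sound
      exact hg.mono fun n hn => by beta_reduce; congr 1; omega
    rw [e1] at key
    exact key.symm'

lemma flaredProj_coe (f : ℕ → FlaredVase) :
    flaredProj ↑f = ↑(fun n => (f n : ℝ × ℝ).1) := by
  rw [flaredProj, Germ.map_coe]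
  rfl

lemma proj_pos_iff (f : ℕ → FlaredVase) :
    0 < flaredProj ↑f ↔ ∀ᶠ n in (↑(Filter.hyperfilter ℕ) : Filter ℕ), 0 < (f n : ℝ × ℝ).1 := by
  rw [flaredProj_coe, ← Germ.coe_zero, Germ.coe_lt]
  rfl

lemma sign_dichotomy (ξ : FlaredVase) (hξ : (ξ : ℝ × ℝ) = (1, 1)) (f : ℕ → FlaredVase)
    (hf : (↑f : St FlaredVase) ∈ INF ξ) :
    (0 < flaredProj ↑f ∧ ∀ᶠ n in (↑(Filter.hyperfilter ℕ) : Filter ℕ),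
        (f n : ℝ × ℝ).1 = (f n : ℝ × ℝ).2) ∨
    (¬ 0 < flaredProj ↑f ∧ ∀ᶠ n in (↑(Filter.hyperfilter ℕ) : Filter ℕ),
        (f n : ℝ × ℝ).1 = -(f n : ℝ × ℝ).2) := by
  have hbig := (INF_iff ξ hξ f).1 hf 1
  by_cases hpos : ∀ᶠ n in (↑(Filter.hyperfilter ℕ) : Filter ℕ),
      (f n : ℝ × ℝ).1 = (f n : ℝ × ℝ).2
  · left
    refine ⟨(proj_pos_iff f).2 ?_, hpos⟩
    filter_upwards [hpos, hbig] with n h1 h2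
    rw [h1]; linarith
  · right
    have hneg : ∀ᶠ n in (↑(Filter.hyperfilter ℕ) : Filter ℕ),
        (f n : ℝ × ℝ).1 = -(f n : ℝ × ℝ).2 := by
      have hnot := Ultrafilter.eventually_not.2 hpos
      filter_upwards [hnot, hbig] with n h1 h2
      rcases FV.ray (f n) h2 with h | h
      · exact absurd h h1
      · exact h
    refine ⟨?_, hneg⟩
    intro hp
    have := (proj_pos_iff f).1 hp
    obtain ⟨n, ⟨⟨h1, h2⟩, h3⟩⟩ := ((this.and hneg).and hbig).exists
    rw [h2] at h1; linarith

lemma not_finClose (ξ : FlaredVase) (hξ : (ξ : ℝ × ℝ) = (1, 1)) (f g : ℕ → FlaredVase)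
    (hf : (↑f : St FlaredVase) ∈ INF ξ)
    (hfpos : ∀ᶠ n in (↑(Filter.hyperfilter ℕ) : Filter ℕ), 0 < (f n : ℝ × ℝ).1)
    (hgneg : ∀ᶠ n in (↑(Filter.hyperfilter ℕ) : Filter ℕ), (g n : ℝ × ℝ).1 ≤ 0) :
    ¬ FinClose (↑f : St FlaredVase) ↑g := by
  intro hc
  obtain ⟨r, hr⟩ := (finClose_iff f g).1 hc
  have hbig := (INF_iff ξ hξ f).1 hf (max r 1)
  obtain ⟨n, ⟨⟨h1, h2⟩, h3⟩, h4⟩ := (((hr.and hfpos).and hgneg).and hbig).exists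
  -- f n is on the positive ray with height > max r 1
  have hray : (f n : ℝ × ℝ).1 = (f n : ℝ × ℝ).2 := by
    rcases FV.ray (f n) (lt_of_le_of_lt (le_max_right r 1) h4) with h | h
    · exact h
    · exfalso; rw [h] at h2; have := FV.height (f n); linarith
  have hd : (f n : ℝ × ℝ).1 - (g n : ℝ × ℝ).1 ≤ dist (f n) (g n) := by
    rw [FV.dist_eq]
    exact le_trans (le_abs_self _) (le_max_left _ _)
  have : r < (f n : ℝ × ℝ).1 := by rw [hray]; exact lt_of_le_of_lt (le_max_left r 1) h4
  linarith

noncomputable def rayH (t u : ℝ) (i : ℕ) : ℝ :=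
  if ⌈|u - t|⌉₊ ≤ i then u else t + i * (if t ≤ u then 1 else -1)

lemma rayH_zero (t u : ℝ) : rayH t u 0 = t := by
  rw [rayH]
  split
  · rename_i h
    have h1 : |u - t| ≤ 0 := Nat.ceil_eq_zero.1 (Nat.le_zero.1 h)
    have h2 : u - t = 0 := abs_eq_zero.1 (le_antisymm h1 (abs_nonneg _))
    linarith
  · simp

lemma rayH_last (t u : ℝ) : rayH t u ⌈|u - t|⌉₊ = u := by
  rw [rayH, if_pos le_rfl]

lemma rayH_min (t u : ℝ) (i : ℕ) : min t u ≤ rayH t u i := by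
  rw [rayH]
  split
  · exact min_le_right _ _
  · rename_i h
    push_neg at h
    split
    · rename_i htu
      have : (0:ℝ) ≤ i := Nat.cast_nonneg i
      have := min_le_left t u
      nlinarith
    · rename_i htu
      push_neg at htu
      -- t + i * (-1) = t - i;  i ≤ N - 1 and N - 1 < t - u
      have hiN : (i : ℝ) ≤ (⌈|u - t|⌉₊ : ℝ) - 1 := by
        have h' : i + 1 ≤ ⌈|u - t|⌉₊ := h
        have h'' : ((i + 1 : ℕ) : ℝ) ≤ ((⌈|u - t|⌉₊ : ℕ) : ℝ) := Nat.cast_le.2 h'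
        push_cast at h''
        linarith
      have hceil : (⌈|u - t|⌉₊ : ℝ) < |u - t| + 1 :=
        Nat.ceil_lt_add_one (abs_nonneg _)
      have habs : |u - t| = t - u := by rw [abs_of_nonpos (by linarith)]; ring
      have := min_le_right t u
      nlinarith

lemma rayH_one (t u : ℝ) (ht : 1 ≤ t) (hu : 1 ≤ u) (i : ℕ) : 1 ≤ rayH t u i :=
  le_trans (le_min ht hu) (rayH_min t u i)

lemma rayH_step (t u : ℝ) (i : ℕ) : |rayH t u (i + 1) - rayH t u i| ≤ 1 := by
  have hle : |u - t| ≤ (⌈|u - t|⌉₊ : ℝ) := Nat.le_ceil _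
  have hceil : (⌈|u - t|⌉₊ : ℝ) < |u - t| + 1 := Nat.ceil_lt_add_one (abs_nonneg _)
  rw [rayH, rayH]
  by_cases h1 : ⌈|u - t|⌉₊ ≤ i
  · rw [if_pos (le_trans h1 (Nat.le_succ i)), if_pos h1]
    simp
  · rw [if_neg h1]
    push_neg at h1
    by_cases h2 : ⌈|u - t|⌉₊ ≤ i + 1
    · rw [if_pos h2]
      have hi : i + 1 = ⌈|u - t|⌉₊ := le_antisymm h1 h2
      have hiR : (i : ℝ) = (⌈|u - t|⌉₊ : ℝ) - 1 := by
        rw [← hi]; push_cast; ring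
      split
      · rename_i htu
        have habs : |u - t| = u - t := abs_of_nonneg (by linarith)
        rw [abs_le]; constructor <;> nlinarith
      · rename_i htu
        push_neg at htu
        have habs : |u - t| = t - u := by rw [abs_of_nonpos (by linarith)]; ring
        rw [abs_le]; constructor <;> nlinarith
    · rw [if_neg h2]
      have : ((i:ℝ) + 1) * (if t ≤ u then (1:ℝ) else -1) - i * (if t ≤ u then (1:ℝ) else -1)
          = (if t ≤ u then (1:ℝ) else -1) := by ring
      split <;> (rw [abs_le]; constructor <;> push_cast <;> nlinarith)

lemma ray_mem (ε : ℝ) (hε : ε = 1 ∨ ε = -1) (h : ℝ) (hh : 1 ≤ h) :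
    ((ε * h, h) : ℝ × ℝ) ∈ FlaredVase := by
  left
  refine ⟨?_, hh⟩
  rcases hε with rfl | rfl
  · left; ring
  · right; ring

/-- chain construction along one ray -/

lemma chain_ray (ξ : FlaredVase) (hξ : (ξ : ℝ × ℝ) = (1, 1)) (ε : ℝ) (hε : ε = 1 ∨ ε = -1)
    (f g : ℕ → FlaredVase)
    (hf : (↑f : St FlaredVase) ∈ INF ξ) (hg : (↑g : St FlaredVase) ∈ INF ξ)
    (hfray : ∀ᶠ n in (↑(Filter.hyperfilter ℕ) : Filter ℕ),
      (f n : ℝ × ℝ).1 = ε * (f n : ℝ × ℝ).2)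
    (hgray : ∀ᶠ n in (↑(Filter.hyperfilter ℕ) : Filter ℕ),
      (g n : ℝ × ℝ).1 = ε * (g n : ℝ × ℝ).2) :
    IotaEquiv ξ (↑f) (↑g) := by
  set t : ℕ → ℝ := fun n => (f n : ℝ × ℝ).2 with ht
  set u : ℕ → ℝ := fun n => (g n : ℝ × ℝ).2 with hu
  have ht1 : ∀ n, 1 ≤ t n := fun n => FV.height (f n)
  have hu1 : ∀ n, 1 ≤ u n := fun n => FV.height (g n)
  refine ⟨fun n => ⌈|u n - t n|⌉₊,
    fun n i => ⟨(ε * rayH (t n) (u n) i, rayH (t n) (u n) i),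
      ray_mem ε hε _ (rayH_one _ _ (ht1 n) (hu1 n) i)⟩, ?_, ?_, ?_, ?_⟩
  · -- left endpoint
    apply Germ.coe_eq.2
    filter_upwards [hfray] with n hn
    apply Subtype.ext
    show (ε * rayH (t n) (u n) 0, rayH (t n) (u n) 0) = ((f n : ℝ × ℝ))
    rw [rayH_zero, ← hn]
  · -- right endpoint
    apply Germ.coe_eq.2
    filter_upwards [hgray] with n hn
    apply Subtype.ext
    show (ε * rayH (t n) (u n) _, rayH (t n) (u n) _) = ((g n : ℝ × ℝ))
    rw [rayH_last, ← hn]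
  · -- membership in INF
    intro c _
    rw [INF_iff ξ hξ]
    intro r
    filter_upwards [(INF_iff ξ hξ f).1 hf r, (INF_iff ξ hξ g).1 hg r] with n h1 h2
    show r < rayH (t n) (u n) (c n)
    calc r < min (t n) (u n) := lt_min h1 h2
    _ ≤ _ := rayH_min _ _ _
  · -- steps
    intro c _
    rw [finClose_iff]
    refine ⟨1, Eventually.of_forall fun n => ?_⟩
    rw [FV.dist_eq]
    apply max_le
    · show |ε * rayH (t n) (u n) (c n) - ε * rayH (t n) (u n) (c n + 1)| ≤ 1
      have : |ε| = 1 := by rcases hε with rfl | rfl <;> simp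
      rw [show ε * rayH (t n) (u n) (c n) - ε * rayH (t n) (u n) (c n + 1)
          = ε * (rayH (t n) (u n) (c n) - rayH (t n) (u n) (c n + 1)) by ring,
        abs_mul, this, one_mul, abs_sub_comm]
      exact rayH_step _ _ _
    · show |rayH (t n) (u n) (c n) - rayH (t n) (u n) (c n + 1)| ≤ 1
      rw [abs_sub_comm]
      exact rayH_step _ _ _

lemma forward_aux (ξ : FlaredVase) (hξ : (ξ : ℝ × ℝ) = (1, 1)) {x y : St FlaredVase}
    {N : ℕ → ℕ} {s : ℕ → ℕ → FlaredVase}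
    (hch : InternalChain (INF ξ) x y N s)
    (hx : 0 < flaredProj x) (hy : ¬ 0 < flaredProj y) : False := by
  classical
  obtain ⟨h1, h2, h3, h4⟩ := hch
  subst h1; subst h2
  have hyINF : (↑(fun n => s n (N n)) : St FlaredVase) ∈ INF ξ :=
    h3 N (Eventually.of_forall fun n => le_rfl)
  have hx' : ∀ᶠ n in (↑(Filter.hyperfilter ℕ) : Filter ℕ), 0 < (s n 0 : ℝ × ℝ).1 :=
    (proj_pos_iff _).1 hx
  have hy' : ∀ᶠ n in (↑(Filter.hyperfilter ℕ) : Filter ℕ), (s n (N n) : ℝ × ℝ).1 ≤ 0 := by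
    rcases sign_dichotomy ξ hξ _ hyINF with ⟨hp, _⟩ | ⟨_, hneg⟩
    · exact absurd hp hy
    · filter_upwards [hneg] with n hn
      rw [hn]; have := FV.height (s n (N n)); linarith
  set G : ℕ → ℕ := fun n => sInf {i | i ≤ N n ∧ (s n i : ℝ × ℝ).1 ≤ 0} with hG
  have hmemA : ∀ᶠ n in (↑(Filter.hyperfilter ℕ) : Filter ℕ),
      G n ≤ N n ∧ (s n (G n) : ℝ × ℝ).1 ≤ 0 := by
    filter_upwards [hy'] with n hn
    exact Nat.sInf_mem (⟨N n, le_rfl, hn⟩ : Set.Nonempty {i | i ≤ N n ∧ (s n i : ℝ × ℝ).1 ≤ 0})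
  have hGpos : ∀ᶠ n in (↑(Filter.hyperfilter ℕ) : Filter ℕ), G n ≠ 0 := by
    filter_upwards [hmemA, hx'] with n hm h1
    intro hG0
    rw [hG0] at hm
    linarith [hm.2]
  have hHlt : ∀ᶠ n in (↑(Filter.hyperfilter ℕ) : Filter ℕ), G n - 1 < N n := by
    filter_upwards [hmemA, hGpos] with n hm hne
    omega
  have hHpos : ∀ᶠ n in (↑(Filter.hyperfilter ℕ) : Filter ℕ),
      0 < (s n (G n - 1) : ℝ × ℝ).1 := by
    filter_upwards [hmemA, hGpos] with n hm hne
    by_contra hc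
    push_neg at hc
    have hmem : G n - 1 ∈ {i | i ≤ N n ∧ (s n i : ℝ × ℝ).1 ≤ 0} := ⟨by omega, hc⟩
    have : G n ≤ G n - 1 := Nat.sInf_le hmem
    omega
  have hINFH := h3 (fun n => G n - 1) (hHlt.mono fun n h => le_of_lt h)
  have hcl := h4 (fun n => G n - 1) hHlt
  have hee : (↑(fun n => s n (G n - 1 + 1)) : St FlaredVase) = ↑(fun n => s n (G n)) := by
    apply Germ.coe_eq.2
    filter_upwards [hGpos] with n hn
    congr 1
    omega
  rw [hee] at hcl
  exact not_finClose ξ hξ _ _ hINFH hHpos (hmemA.mono fun n h => h.2) hcl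

lemma infinite_point (ξ : FlaredVase) (hξ : (ξ : ℝ × ℝ) = (1, 1)) (ε : ℝ)
    (hε : ε = 1 ∨ ε = -1) :
    ∃ f : ℕ → FlaredVase, (↑f : St FlaredVase) ∈ INF ξ ∧
      ∀ n, (f n : ℝ × ℝ) = (ε * ((n : ℝ) + 1), (n : ℝ) + 1) := by
  have hmem : ∀ n : ℕ, ((ε * ((n : ℝ) + 1), (n : ℝ) + 1) : ℝ × ℝ) ∈ FlaredVase := by
    intro n
    left
    have h1 : (1 : ℝ) ≤ (n : ℝ) + 1 := by
      have : (0 : ℝ) ≤ (n : ℝ) := Nat.cast_nonneg n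
      linarith
    refine ⟨?_, h1⟩
    rcases hε with rfl | rfl
    · left; ring
    · right; ring
  refine ⟨fun n => ⟨_, hmem n⟩, ?_, fun n => rfl⟩
  rw [INF_iff ξ hξ]
  intro r
  apply Filter.hyperfilter_le_cofinite
  rw [Nat.cofinite_eq_atTop]
  filter_upwards [Filter.eventually_ge_atTop ⌈r⌉₊] with n hn
  show r < (n : ℝ) + 1
  calc r ≤ ⌈r⌉₊ := Nat.le_ceil r
  _ ≤ (n : ℝ) := by exact_mod_cast hn
  _ < n + 1 := by linarith

/-- For the flared vase with base point `(1,1)`, two infinite points are `≡ι`-related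
iff their first coordinates have the same sign; both signs occur, so `ι(W)` has exactly
two elements. -/
theorem iota_flaredVase (ξ : FlaredVase) (hξ : (ξ : ℝ × ℝ) = (1, 1)) :
    (∀ x ∈ INF ξ, ∀ y ∈ INF ξ,
      (IotaEquiv ξ x y ↔ (0 < flaredProj x ↔ 0 < flaredProj y))) ∧
    (∃ x ∈ INF ξ, 0 < flaredProj x) ∧ (∃ y ∈ INF ξ, ¬ 0 < flaredProj y) := by
  refine ⟨?_, ?_, ?_⟩
  · intro x hx y hy
    constructor
    · rintro ⟨N, s, hch⟩
      constructor
      · intro hpx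
        by_contra hny
        exact forward_aux ξ hξ hch hpx hny
      · intro hpy
        by_contra hnx
        exact forward_aux ξ hξ hch.rev hpy hnx
    · intro hiff
      obtain ⟨f, rfl⟩ : ∃ f : ℕ → FlaredVase, (↑f : St FlaredVase) = x := Quotient.exists_rep x
      obtain ⟨g, rfl⟩ : ∃ g : ℕ → FlaredVase, (↑g : St FlaredVase) = y := Quotient.exists_rep y
      rcases sign_dichotomy ξ hξ f hx with ⟨hpf, hrf⟩ | ⟨hpf, hrf⟩ <;>
        rcases sign_dichotomy ξ hξ g hy with ⟨hpg, hrg⟩ | ⟨hpg, hrg⟩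
      · exact chain_ray ξ hξ 1 (Or.inl rfl) f g hx hy
          (hrf.mono fun n hn => by rw [hn, one_mul])
          (hrg.mono fun n hn => by rw [hn, one_mul])
      · exact absurd (hiff.1 hpf) hpg
      · exact absurd (hiff.2 hpg) hpf
      · exact chain_ray ξ hξ (-1) (Or.inr rfl) f g hx hy
          (hrf.mono fun n hn => by rw [hn]; ring)
          (hrg.mono fun n hn => by rw [hn]; ring)
  · obtain ⟨f, hf, hfe⟩ := infinite_point ξ hξ 1 (Or.inl rfl)
    refine ⟨↑f, hf, (proj_pos_iff f).2 (Eventually.of_forall fun n => ?_)⟩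
    rw [hfe n]
    have : (0 : ℝ) ≤ (n : ℝ) := Nat.cast_nonneg n
    show (0 : ℝ) < 1 * ((n : ℝ) + 1)
    linarith
  · obtain ⟨g, hg, hge⟩ := infinite_point ξ hξ (-1) (Or.inr rfl)
    refine ⟨↑g, hg, ?_⟩
    rw [proj_pos_iff g]
    intro hc
    obtain ⟨n, hn⟩ := hc.exists
    rw [hge n] at hn
    have : (0 : ℝ) ≤ (n : ℝ) := Nat.cast_nonneg n
    have hn' : (0 : ℝ) < -1 * ((n : ℝ) + 1) := hn
    linarith
end

section
/- (The square-number space has no coarse sequence.) Let S := {x : ℝ | ∃ n : ℕ, x = (n : ℝ)^2}, regarded as a metric space with the metric inherited from ℝ. Then there is no coarse sequence on S: no map s : ℕ → S is both bornologous and proper. In particular σ(S, ξ) is empty for every base point ξ ∈ S, while S is unbounded. -/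
open Filter

/-- The square-number space. -/
def SqSet : Set ℝ := {x | ∃ n : ℕ, x = (n : ℝ) ^ 2}

/-- The square-number space admits no coarse sequence (so `σ(S,ξ)` is empty for every
base point), although it is unbounded. -/
theorem squareNumberSpace_no_coarseSeq :
    (∀ s : ℕ → SqSet, ¬ CoarseSeq s) ∧ ¬ BoundedSet (Set.univ : Set SqSet) := by
  constructor
  · rintro s ⟨hb, hp⟩
    obtain ⟨r₀, hr₀⟩ := hb 1
    set r := max r₀ 0 with hrdef
    have hr0 : (0:ℝ) ≤ r := le_max_right _ _
    have hstep : ∀ m : ℕ, dist (s m) (s (m+1)) ≤ r := fun m =>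
      le_trans (hr₀ m (m+1) (by simp [Nat.dist])) (le_max_left _ _)
    have hnn : ∀ m : ℕ, (0:ℝ) ≤ (s m : ℝ) := by
      intro m
      obtain ⟨a, ha⟩ := (s m).2
      rw [ha]; positivity
    have key : ∀ m : ℕ, r^2 < (s m : ℝ) → s (m+1) = s m := by
      intro m hm
      obtain ⟨a, ha⟩ := (s m).2
      obtain ⟨b, hb'⟩ := (s (m+1)).2
      have hdist : |(b:ℝ)^2 - (a:ℝ)^2| ≤ r := by
        have h := hstep m
        rw [Subtype.dist_eq, Real.dist_eq, ha, hb'] at h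
        rwa [abs_sub_comm] at h
      have har : r < (a:ℝ) := by nlinarith [ha ▸ hm]
      have hab : a = b := by
        by_contra hne
        rcases Nat.lt_or_ge a b with h | h
        · have hb1 : (a:ℝ) + 1 ≤ (b:ℝ) := by exact_mod_cast h
          have : (b:ℝ)^2 - (a:ℝ)^2 ≤ r := (abs_le.mp hdist).2
          nlinarith
        · have h' : b < a := lt_of_le_of_ne h (fun he => hne he.symm)
          have hb1 : (b:ℝ) + 1 ≤ (a:ℝ) := by exact_mod_cast h'
          have hbn : (0:ℝ) ≤ (b:ℝ) := by positivity
          have : -r ≤ (b:ℝ)^2 - (a:ℝ)^2 := (abs_le.mp hdist).1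
          nlinarith
      exact Subtype.ext (by rw [hb', ha, hab])
    by_cases hcase : ∀ n : ℕ, (s n : ℝ) ≤ r^2
    · have hbd : BoundedSet {x : SqSet | (x:ℝ) ≤ r^2} := by
        refine ⟨r^2, ?_⟩
        rintro a ha b hb
        simp only [Set.mem_setOf_eq] at ha hb
        have hna : (0:ℝ) ≤ (a:ℝ) := by obtain ⟨n, hn⟩ := a.2; rw [hn]; positivity
        have hnb : (0:ℝ) ≤ (b:ℝ) := by obtain ⟨n, hn⟩ := b.2; rw [hn]; positivity
        rw [Subtype.dist_eq, Real.dist_eq, abs_le]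
        constructor <;> [linarith [hb]; linarith [ha]]
      have hfin := hp _ hbd
      have : s ⁻¹' {x : SqSet | (x:ℝ) ≤ r^2} = Set.univ :=
        Set.eq_univ_of_forall (fun n => hcase n)
      rw [this] at hfin
      exact Set.infinite_univ hfin
    · push_neg at hcase
      obtain ⟨n₀, hn₀⟩ := hcase
      have hconst : ∀ k : ℕ, s (n₀ + k) = s n₀ := by
        intro k
        induction k with
        | zero => rfl
        | succ k ih =>
          have : s (n₀ + k + 1) = s (n₀ + k) := key _ (by rw [ih]; exact hn₀)
          rw [← Nat.add_assoc] at *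
          rw [this, ih]
      have hbd : BoundedSet {s n₀} := by
        refine ⟨0, ?_⟩
        rintro a rfl b rfl
        simp
      have hfin := hp _ hbd
      have hsub : Set.Ici n₀ ⊆ s ⁻¹' {s n₀} := by
        intro m hm
        have : s m = s n₀ := by
          have := hconst (m - n₀)
          rwa [Nat.add_sub_cancel' hm] at this
        exact this
      exact (Set.Ici_infinite n₀) (hfin.subset hsub)
  · rintro ⟨r, hr⟩
    obtain ⟨n, hn⟩ := exists_nat_gt (max r 1)
    have h1 : (1:ℝ) ≤ (n:ℝ) := le_of_lt (lt_of_le_of_lt (le_max_right _ _) hn)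
    have hrn : r < (n:ℝ) := lt_of_le_of_lt (le_max_left _ _) hn
    have hx : ((n:ℝ)^2) ∈ SqSet := ⟨n, rfl⟩
    have hy : (0:ℝ) ∈ SqSet := ⟨0, by norm_num⟩
    have := hr ⟨_, hx⟩ trivial ⟨_, hy⟩ trivial
    rw [Subtype.dist_eq, Real.dist_eq] at this
    simp only [sub_zero] at this
    rw [abs_of_nonneg (by positivity)] at this
    nlinarith
end
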